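/- Let $A$ be a commutative ring, $\alpha_* = -\mathrm{id}$ on $A^4$, and $\beta_*(v_1,v_2,v_3,v_4) = (v_1, -v_2, v_3, -v_4)$. If $d$ is a crossed homomorphism on a group with elements $a, b$ acting via $\alpha_*, \beta_*$ and satisfying $aba = b$, with $d(a) = (\omega_{11},\omega_{12},\omega_{13},\omega_{14})$ and $d(b) = (\omega_{21},\omega_{22},\omega_{23},\omega_{24})$, then $2\omega_{21} = 2\omega_{23} = 0$, $2\omega_{12} = 2\omega_{22}$, and $2\omega_{14} = 2\omega_{24}$. -/

import Mathlib

/-! Applying the cocycle identity twice to `a * b * a = b` gives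
`d a + α (d b) + α (β (d a)) = d b`. With `α = -1` this reads `d a - β (d a) = 2 • d b`,
and since `β` fixes the odd coordinates and negates the even ones, the four coordinates of
this identity are the four claimed relations. -/

theorem crossedHom_eq_of_mul_mul_eq {R M G : Type*} [Semiring R] [AddCommMonoid M] [Module R M]
    [Monoid G] (ρ : G →* Module.End R M) (d : G → M)
    (hd : ∀ g g' : G, d (g * g') = d g + ρ g (d g')) {a b : G} (hrel : a * b * a = b) :
    d a + ρ a (d b) + ρ a (ρ b (d a)) = d b := by
  rw [← Module.End.mul_apply, ← map_mul, ← hd, ← hd, hrel]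

theorem crossedHom_sub_eq_two_smul_of_eq_neg_one {R M G : Type*} [Ring R] [AddCommGroup M]
    [Module R M] [Monoid G] (ρ : G →* Module.End R M) (d : G → M)
    (hd : ∀ g g' : G, d (g * g') = d g + ρ g (d g')) {a b : G} (hrel : a * b * a = b)
    (hρa : ρ a = -1) :
    d a - ρ b (d a) = (2 : ℕ) • d b := by
  have h := crossedHom_eq_of_mul_mul_eq ρ d hd hrel
  rw [hρa] at h
  simp only [LinearMap.neg_apply, Module.End.one_apply] at h
  rw [two_nsmul]
  linear_combination (norm := module) h

theorem stmt_8 (A : Type*) [CommRing A] {G : Type*} [Group G]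
    (ρ : G →* Module.End A (Fin 4 → A))
    (a b : G)
    (hρa : ρ a = (-(1 : Matrix (Fin 4) (Fin 4) A)).mulVecLin)
    (hρb : ρ b = (!![1,0,0,0; 0,-1,0,0; 0,0,1,0; 0,0,0,-1] :
      Matrix (Fin 4) (Fin 4) A).mulVecLin)
    (hrel : a * b * a = b)
    (d : G → (Fin 4 → A))
    (hd : ∀ g g' : G, d (g * g') = d g + ρ g (d g'))
    (ω11 ω12 ω13 ω14 ω21 ω22 ω23 ω24 : A)
    (hda : d a = ![ω11, ω12, ω13, ω14])
    (hdb : d b = ![ω21, ω22, ω23, ω24]) :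
    2 * ω21 = 0 ∧ 2 * ω23 = 0 ∧ 2 * ω12 = 2 * ω22 ∧ 2 * ω14 = 2 * ω24 := by
  have hα : ρ a = -1 := by
    refine LinearMap.ext fun v => ?_
    simp [hρa]
  have key := crossedHom_sub_eq_two_smul_of_eq_neg_one ρ d hd hrel hα
  rw [hρb, hda, hdb] at key
  have h1 : 0 = 2 * ω21 := by simpa using congrFun key 0
  have h2 : ω12 + ω12 = 2 * ω22 := by simpa using congrFun key 1
  have h3 : 0 = 2 * ω23 := by simpa using congrFun key 2
  have h4 : ω14 + ω14 = 2 * ω24 := by simpa using congrFun key 3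
  exact ⟨h1.symm, h3.symm, by linear_combination h2, by linear_combination h4⟩
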